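/- Suppose X, X*, Y are binary random variables with 0 < Pr(X=1) < 1, and suppose: (i) Pr(X*=x* | X←x) = Pr(X*=x*) for all x, x*; (ii) Pr(Y=y | X*=x, X←x) = Pr(Y=y | X*=x, X=x) for x = 0,1; (iii) X* = X almost surely in the observational regime. Then Pr(Y=y | X*=1, X←0) = (Pr(Y=y | X←0) - Pr(Y=y, X=0)) / Pr(X=1) and Pr(Y=y | X*=0, X←1) = (Pr(Y=y | X←1) - Pr(Y=y, X=1)) / Pr(X=0). -/
import Mathlib


/-- ITT identification theorem (Theorem 1 of Dawid–Senn).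
`Pobs x y` is the observational joint probability `Pr(X=x, Y=y)`
(with `X* = X` almost surely in the observational regime, so `Pr(X*=x*) =
Pr(X=x*)`), and `Pint x xs y` is the interventional joint probability
`Pr(X*=xs, Y=y | X←x)`.  Booleans code `1 = true`, `0 = false`.
Under (i) `Pr(X*=x*|X←x) = Pr(X*=x*)` and (ii) distributional consistency
`Pr(Y=y|X*=x, X←x) = Pr(Y=y|X*=x, X=x)`, with `0 < Pr(X=1) < 1`, the
cross-world conditionals are identified:
`Pr(Y=y|X*=1, X←0) = (Pr(Y=y|X←0) - Pr(Y=y, X=0))/Pr(X=1)` and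
`Pr(Y=y|X*=0, X←1) = (Pr(Y=y|X←1) - Pr(Y=y, X=1))/Pr(X=0)`. -/
theorem stmt11 (Pobs : Bool → Bool → ℝ) (Pint : Bool → Bool → Bool → ℝ)
    (hobs_nonneg : ∀ x y, 0 ≤ Pobs x y)
    (hobs_sum : Pobs true true + Pobs true false + Pobs false true + Pobs false false = 1)
    (hint_nonneg : ∀ x xs y, 0 ≤ Pint x xs y)
    (hint_sum : ∀ x, Pint x true true + Pint x true false +
      Pint x false true + Pint x false false = 1)
    (hX1pos : 0 < Pobs true true + Pobs true false)
    (hX1lt : Pobs true true + Pobs true false < 1)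
    -- (i): the intervention does not affect the distribution of `X*`,
    -- which (by `X* = X` observationally) is that of `X`:
    (hi : ∀ x xs, Pint x xs true + Pint x xs false = Pobs xs true + Pobs xs false)
    -- (ii): distributional consistency, `Pr(Y=y | X*=x, X←x) = Pr(Y=y | X*=x, X=x)`:
    (hii : ∀ x y, Pint x x y / (Pint x x true + Pint x x false)
      = Pobs x y / (Pobs x true + Pobs x false)) :
    (∀ y, Pint false true y / (Pint false true true + Pint false true false)
      = ((Pint false true y + Pint false false y) - Pobs false y)
        / (Pobs true true + Pobs true false)) ∧
    (∀ y, Pint true false y / (Pint true false true + Pint true false false)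
      = ((Pint true true y + Pint true false y) - Pobs true y)
        / (Pobs false true + Pobs false false)) := by
  have hB : 0 < Pobs false true + Pobs false false := by linarith
  have hff : ∀ y, Pint false false y = Pobs false y := by
    intro y
    have h := hii false y
    rw [hi false false] at h
    field_simp at h
    linarith
  have htt : ∀ y, Pint true true y = Pobs true y := by
    intro y
    have h := hii true y
    rw [hi true true] at h
    field_simp at h
    linarith
  constructor
  · intro y
    rw [hi false true, hff y]
    ring_nf
  · intro y
    rw [hi true false, htt y]
    ring_nf
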